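/- arXiv:0911.1602 — 2 statements merged into one kernel-verified Lean document; each statement's English description precedes it below -/
import Mathlib

section
/- Let T be a 3-form on a Euclidean vector space V and let X ∈ V. The natural action of the 2-form X ⌟ T (viewed as a skew-symmetric endomorphism) on the 3-form T satisfies ((X ⌟ T)·T)(Y,Z,W) = σ_T(Y,Z,W,X) for all Y,Z,W, where σ_T is the 4-form defined by σ_T(X,Y,Z,W) = ⟨T(X,Y),T(Z,W)⟩ + ⟨T(Y,Z),T(X,W)⟩ + ⟨T(Z,X),T(Y,W)⟩. -/
/-! Cyclic invariance of `T` moves the endomorphism argument of each term of `(X ⌟ T)·T` to the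
last slot, where `T(A,B,t(X,C)) = ⟨t(A,B), t(X,C)⟩`; skew-symmetry of `t` turns this into
`-⟨t(A,B), t(C,X)⟩`, and the three terms are those of `σ_T(Y,Z,W,X)`. -/

theorem cyclic_of_skew {α R : Type*} [Ring R] {T : α → α → α → R}
    (hskew1 : ∀ X Y Z, T X Y Z = - T Y X Z) (hskew2 : ∀ X Y Z, T X Y Z = - T X Z Y)
    (A B C : α) : T A B C = T C A B := by
  rw [hskew1, hskew2, hskew1, hskew2, neg_neg, neg_neg]

theorem neg_apply_eq_inner_swap {V : Type*} [NormedAddCommGroup V] [InnerProductSpace ℝ V]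
    {T : V → V → V → ℝ} (hskew1 : ∀ X Y Z, T X Y Z = - T Y X Z)
    {t : V → V → V} (ht : ∀ X Y Z, (inner ℝ (t X Y) Z : ℝ) = T X Y Z) (A B C D : V) :
    - T A B (t C D) = inner ℝ (t A B) (t D C) := by
  rw [← ht, real_inner_comm, ht, hskew1, neg_neg, ← ht, real_inner_comm]

theorem two_form_action_on_torsion_general {n : ℕ}
    (T : EuclideanSpace ℝ (Fin n) → EuclideanSpace ℝ (Fin n) → EuclideanSpace ℝ (Fin n) → ℝ)
    (hskew1 : ∀ X Y Z, T X Y Z = - T Y X Z)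
    (hskew2 : ∀ X Y Z, T X Y Z = - T X Z Y)
    (t : EuclideanSpace ℝ (Fin n) → EuclideanSpace ℝ (Fin n) → EuclideanSpace ℝ (Fin n))
    (ht : ∀ X Y Z, (inner ℝ (t X Y) Z : ℝ) = T X Y Z)
    (X Y Z W : EuclideanSpace ℝ (Fin n)) :
    - T (t X Y) Z W - T Y (t X Z) W - T Y Z (t X W)
      = (inner ℝ (t Y Z) (t W X) : ℝ) + inner ℝ (t Z W) (t Y X) + inner ℝ (t W Y) (t Z X) := by
  rw [← cyclic_of_skew hskew1 hskew2 Z W (t X Y), cyclic_of_skew hskew1 hskew2 Y (t X Z) W]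
  linarith [neg_apply_eq_inner_swap hskew1 ht Z W X Y, neg_apply_eq_inner_swap hskew1 ht W Y X Z,
    neg_apply_eq_inner_swap hskew1 ht Y Z X W]

/-- For a 3-form `T` on a Euclidean vector space and `X ∈ V`, the natural
action of the 2-form `X ⌟ T` (viewed as the skew-symmetric endomorphism `Y ↦ T(X,Y)`) on the
3-form `T` satisfies `((X ⌟ T)·T)(Y,Z,W) = σ_T(Y,Z,W,X)`, where
`σ_T(X,Y,Z,W) = ⟨T(X,Y),T(Z,W)⟩ + ⟨T(Y,Z),T(X,W)⟩ + ⟨T(Z,X),T(Y,W)⟩`. -/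
theorem two_form_action_on_torsion {n : ℕ}
    (T : EuclideanSpace ℝ (Fin n) → EuclideanSpace ℝ (Fin n) → EuclideanSpace ℝ (Fin n) → ℝ)
    (hlin : ∀ Y Z, IsLinearMap ℝ fun X => T X Y Z)
    (hskew1 : ∀ X Y Z, T X Y Z = - T Y X Z)
    (hskew2 : ∀ X Y Z, T X Y Z = - T X Z Y)
    (t : EuclideanSpace ℝ (Fin n) → EuclideanSpace ℝ (Fin n) → EuclideanSpace ℝ (Fin n))
    (ht : ∀ X Y Z, (inner ℝ (t X Y) Z : ℝ) = T X Y Z)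
    (X Y Z W : EuclideanSpace ℝ (Fin n)) :
    - T (t X Y) Z W - T Y (t X Z) W - T Y Z (t X W)
      = (inner ℝ (t Y Z) (t W X) : ℝ) + inner ℝ (t Z W) (t Y X) + inner ℝ (t W Y) (t Z X) :=
  two_form_action_on_torsion_general T hskew1 hskew2 t ht X Y Z W
end

section
/- Let ∇ be a flat metric connection with totally skew-symmetric torsion T on a Riemannian manifold. Then the Riemannian curvature tensor is given by R^g(X,Y,Z,V) = −(1/6)⟨T(X,Y),T(Z,V)⟩ + (1/12)⟨T(Y,Z),T(X,V)⟩ + (1/12)⟨T(Z,X),T(Y,V)⟩. -/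
/-- An abstract calculus of vector fields on a Riemannian manifold: `C` is the ring of smooth
functions, `X` the `C`-module of vector fields, `g` the Riemannian metric, `D` the directional
derivative, `bracket` the Lie bracket and `lc` the Levi-Civita connection `∇^g`. -/
structure VectorFieldCalculus (C X : Type*) [CommRing C] [Algebra ℝ C]
    [AddCommGroup X] [Module C X] where
  g : X → X → C
  D : X → C → C
  bracket : X → X → X
  lc : X → X → X
  g_symm : ∀ a b, g a b = g b a
  g_add_left : ∀ a b c, g (a + b) c = g a c + g b c
  g_smul_left : ∀ (f : C) a b, g (f • a) b = f * g a b
  g_definite : ∀ a, g a a = 0 → a = 0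
  D_add : ∀ v f h, D v (f + h) = D v f + D v h
  D_mul : ∀ v f h, D v (f * h) = f * D v h + h * D v f
  D_algebraMap : ∀ v (r : ℝ), D v (algebraMap ℝ C r) = 0
  D_add_vec : ∀ v w f, D (v + w) f = D v f + D w f
  D_smul_vec : ∀ (f : C) v h, D (f • v) h = f * D v h
  bracket_antisymm : ∀ a b, bracket a b = - bracket b a
  bracket_jacobi : ∀ a b c,
    bracket (bracket a b) c + bracket (bracket b c) a + bracket (bracket c a) b = 0
  bracket_D : ∀ a b f, D (bracket a b) f = D a (D b f) - D b (D a f)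
  bracket_leibniz : ∀ a (f : C) b, bracket a (f • b) = D a f • b + f • bracket a b
  lc_add : ∀ z a b, lc z (a + b) = lc z a + lc z b
  lc_smul : ∀ z (f : C) a, lc z (f • a) = D z f • a + f • lc z a
  lc_add_vec : ∀ z w a, lc (z + w) a = lc z a + lc w a
  lc_smul_vec : ∀ (f : C) z a, lc (f • z) a = f • lc z a
  lc_metric : ∀ z a b, D z (g a b) = g (lc z a) b + g a (lc z b)
  lc_torsion_free : ∀ a b, lc a b - lc b a = bracket a b

/-- A vector field `k` is Killing iff `⟨∇_v k, w⟩ + ⟨∇_w k, v⟩ = 0` for all `v, w`. -/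
def VectorFieldCalculus.IsKilling {C X : Type*} [CommRing C] [Algebra ℝ C]
    [AddCommGroup X] [Module C X] (V : VectorFieldCalculus C X) (k : X) : Prop :=
  ∀ v w, V.g (V.lc v k) w + V.g (V.lc w k) v = 0

/-!
Write `∇ = ∇^g + s T` with `s = 1/2`. Expanding `R^∇ = 0` expresses `R^g(a,b,c,d)` as
`A(b,a,c,d) - A(a,b,c,d) + Q(a,b,c,d)` with `A = s ∇^g T`, alternating in its last three
arguments, and `Q(a,b,c,d) = s² (⟨T(a,d),T(b,c)⟩ - ⟨T(b,d),T(a,c)⟩)`. Both `R^g` and `Q` are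
symmetric under exchanging the pairs `(a,b)` and `(c,d)`, and this forces `A` to be alternating
in all four arguments. The first Bianchi identity then determines it, `6 A = σ_{abc} Q`, and
substituting back gives `3 R^g = 2 Q(a,b,c,d) - Q(b,c,a,d) - Q(c,a,b,d)`.
-/

theorem IsAddTorsionFree.of_module_of_charZero (K M : Type*) [DivisionSemiring K] [CharZero K]
    [AddCommMonoid M] [Module K M] : IsAddTorsionFree M :=
  let _ : Module ℚ≥0 M := Module.compHom M (algebraMap ℚ≥0 K)
  .of_module_nnrat M

section AlgebraicCurvatureTensor

variable {ι M : Type*} [AddCommGroup M]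

structure IsAlgebraicCurvatureTensor (R : ι → ι → ι → ι → M) : Prop where
  antisymm_left : ∀ a b c d, R b a c d = -R a b c d
  antisymm_right : ∀ a b c d, R a b d c = -R a b c d
  bianchi : ∀ a b c d, R a b c d + R b c a d + R c a b d = 0

variable [IsAddTorsionFree M]

theorem IsAlgebraicCurvatureTensor.pair_symm {R : ι → ι → ι → ι → M} (hR : IsAlgebraicCurvatureTensor R)
    (a b c d : ι) : R c d a b = R a b c d := by
  obtain ⟨antisymm_left, antisymm_right, bianchi⟩ := hR
  refine (nsmul_right_inj two_ne_zero).mp ?_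
  linear_combination (norm := module)
    -bianchi a b c d + bianchi a b d c + bianchi a c d b - bianchi b c d a
    - antisymm_right a b c d + antisymm_left a c b d - antisymm_right a c b d
    - antisymm_left a d b c + antisymm_right a d b c - antisymm_left a d c b
    + antisymm_right b c a d - antisymm_right b d a c + antisymm_left b d c a
    + antisymm_right c d a b

theorem antisymm_left_of_pair_symm {A : ι → ι → ι → ι → M}
    (hA₁₂ : ∀ a b c d, A a c b d = -A a b c d) (hA₂₃ : ∀ a b c d, A a b d c = -A a b c d)
    (hpair : ∀ a b c d, A a b c d - A b a c d = A c d a b - A d c a b) (a b c d : ι) :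
    A b a c d = -A a b c d := by
  refine (nsmul_right_inj two_ne_zero).mp ?_
  linear_combination (norm := module)
    -hpair a b c d - hpair a b d c - hpair a c b d + hpair a d b c
    + hA₁₂ a b c d + 2 • hA₂₃ a b c d - hA₁₂ a b d c + hA₁₂ b a c d - hA₁₂ b a d c
    - hA₁₂ c a b d + hA₁₂ d a b c

theorem IsAlgebraicCurvatureTensor.three_nsmul_eq {R A Q : ι → ι → ι → ι → M} (hR : IsAlgebraicCurvatureTensor R)
    (hA₁₂ : ∀ a b c d, A a c b d = -A a b c d) (hA₂₃ : ∀ a b c d, A a b d c = -A a b c d)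
    (hQ : ∀ a b c d, Q c d a b = Q a b c d)
    (h : ∀ a b c d, R a b c d = A b a c d - A a b c d + Q a b c d) (a b c d : ι) :
    3 • R a b c d = 2 • Q a b c d - Q b c a d - Q c a b d := by
  have hA := antisymm_left_of_pair_symm hA₁₂ hA₂₃ fun a b c d ↦ by
    linear_combination (norm := module)
      h a b c d + hR.pair_symm a b c d - hQ a b c d - h c d a b
  linear_combination (norm := module)
    2 • h a b c d - h b c a d - h c a b d + hR.bianchi a b c d + hA a c b d - hA b c a d
    - 2 • hA₁₂ a b c d + 2 • hA₁₂ b a c d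

end AlgebraicCurvatureTensor

namespace VectorFieldCalculus

variable {C X : Type*} [CommRing C] [Algebra ℝ C] [AddCommGroup X] [Module C X]
  (V : VectorFieldCalculus C X)

theorem g_sub_left (a b c : X) : V.g (a - b) c = V.g a c - V.g b c :=
  map_sub (AddMonoidHom.mk' (V.g · c) (V.g_add_left · · c)) a b

theorem g_zero_left (c : X) : V.g 0 c = 0 :=
  map_zero (AddMonoidHom.mk' (V.g · c) (V.g_add_left · · c))

theorem g_neg_left (a c : X) : V.g (-a) c = -V.g a c :=
  map_neg (AddMonoidHom.mk' (V.g · c) (V.g_add_left · · c)) a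

theorem g_add_right (a b c : X) : V.g a (b + c) = V.g a b + V.g a c := by
  rw [V.g_symm, V.g_add_left, V.g_symm b, V.g_symm c]

theorem g_smul_right (f : C) (a b : X) : V.g a (f • b) = f * V.g a b := by
  rw [V.g_symm, V.g_smul_left, V.g_symm]

theorem g_sub_right (a b c : X) : V.g a (b - c) = V.g a b - V.g a c := by
  rw [V.g_symm, V.g_sub_left, V.g_symm b, V.g_symm c]

theorem D_neg (v : X) (f : C) : V.D v (-f) = -V.D v f :=
  map_neg (AddMonoidHom.mk' (V.D v) (V.D_add v)) f

theorem lc_sub (z a b : X) : V.lc z (a - b) = V.lc z a - V.lc z b :=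
  map_sub (AddMonoidHom.mk' (V.lc z) (V.lc_add z)) a b

theorem lc_neg_vec (z a : X) : V.lc (-z) a = -V.lc z a := by
  rw [← neg_one_smul C z, V.lc_smul_vec, neg_one_smul]

def curvature (a b c : X) : X :=
  V.lc a (V.lc b c) - V.lc b (V.lc a c) - V.lc (V.bracket a b) c

def curvatureForm (a b c d : X) : C := V.g (V.curvature a b c) d

theorem curvature_antisymm (a b c : X) : V.curvature b a c = -V.curvature a b c := by
  rw [curvature, curvature, V.bracket_antisymm b a, V.lc_neg_vec]
  abel

theorem curvature_cyclic_sum (a b c : X) :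
    V.curvature a b c + V.curvature b c a + V.curvature c a b = 0 := by
  have hlc : ∀ x y z, V.lc x (V.lc y z) - V.lc x (V.lc z y) = V.lc x (V.bracket y z) :=
    fun x y z ↦ by rw [← V.lc_torsion_free, V.lc_sub]
  have hbr : ∀ x y z, V.bracket x (V.bracket y z) = -V.bracket (V.bracket y z) x :=
    fun x y z ↦ V.bracket_antisymm _ _
  unfold curvature
  linear_combination (norm := module) hlc a b c + hlc b c a + hlc c a b
    + V.lc_torsion_free a (V.bracket b c) + V.lc_torsion_free b (V.bracket c a)
    + V.lc_torsion_free c (V.bracket a b)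
    + hbr a b c + hbr b c a + hbr c a b - V.bracket_jacobi a b c

theorem curvatureForm_antisymm_right (a b c d : X) :
    V.curvatureForm a b d c = -V.curvatureForm a b c d := by
  have hD : ∀ x y z w, V.D x (V.D y (V.g z w)) = V.g (V.lc x (V.lc y z)) w
      + V.g (V.lc y z) (V.lc x w) + (V.g (V.lc x z) (V.lc y w) + V.g z (V.lc x (V.lc y w))) :=
    fun x y z w ↦ by rw [V.lc_metric, V.D_add, V.lc_metric, V.lc_metric]
  have hbr := V.bracket_D a b (V.g c d)
  rw [V.lc_metric, hD, hD] at hbr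
  simp only [curvatureForm, curvature, V.g_sub_left]
  linear_combination -hbr + V.g_symm (V.lc a (V.lc b d)) c - V.g_symm (V.lc b (V.lc a d)) c
    - V.g_symm (V.lc (V.bracket a b) d) c

theorem isAlgebraicCurvatureTensor_curvatureForm : IsAlgebraicCurvatureTensor V.curvatureForm where
  antisymm_left a b c d := by rw [curvatureForm, curvature_antisymm, g_neg_left]; rfl
  antisymm_right := V.curvatureForm_antisymm_right
  bianchi a b c d := by
    simp only [curvatureForm, ← V.g_add_left, curvature_cyclic_sum, g_zero_left]

section Torsion

/-- `(∇^g_a T)(b, c, d)` for the 3-form `T(b, c, d) = ⟨t b c, d⟩`. -/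
def covDerivTorsion (t : X → X → X) (a b c d : X) : C :=
  V.D a (V.g (t b c) d) - V.g (t (V.lc a b) c) d - V.g (t b (V.lc a c)) d
    - V.g (t b c) (V.lc a d)

variable {t : X → X → X}

theorem covDerivTorsion_antisymm₁₂
    (hskew1 : ∀ a b c, V.g (t a b) c = -V.g (t b a) c) (a b c d : X) :
    V.covDerivTorsion t a c b d = -V.covDerivTorsion t a b c d := by
  rw [covDerivTorsion, covDerivTorsion, hskew1 c b, V.D_neg]
  linear_combination -hskew1 (V.lc a c) b d - hskew1 c (V.lc a b) d - hskew1 c b (V.lc a d)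

theorem covDerivTorsion_antisymm₂₃
    (hskew2 : ∀ a b c, V.g (t a b) c = -V.g (t a c) b) (a b c d : X) :
    V.covDerivTorsion t a b d c = -V.covDerivTorsion t a b c d := by
  rw [covDerivTorsion, covDerivTorsion, hskew2 b d c, V.D_neg]
  linear_combination -hskew2 (V.lc a b) d c - hskew2 b (V.lc a d) c - hskew2 b d (V.lc a c)

theorem curvatureForm_eq_of_flat
    (hskew1 : ∀ a b c, V.g (t a b) c = -V.g (t b a) c)
    (hskew2 : ∀ a b c, V.g (t a b) c = -V.g (t a c) b) (s : ℝ) {nab : X → X → X}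
    (hnab : ∀ a b, nab a b = V.lc a b + algebraMap ℝ C s • t a b)
    (hflat : ∀ a b c, nab a (nab b c) - nab b (nab a c) - nab (V.bracket a b) c = 0)
    (a b c d : X) :
    V.curvatureForm a b c d
      = s • (V.covDerivTorsion t b a c d - V.covDerivTorsion t a b c d)
        + (s * s) • (V.g (t a d) (t b c) - V.g (t b d) (t a c)) := by
  set σ := algebraMap ℝ C s
  have hcyc : ∀ x y z, V.g (t x y) z = V.g (t y z) x := fun x y z ↦ by
    rw [hskew1, hskew2, neg_neg]
  have hiter : ∀ x y, V.g (nab x (nab y c)) d = V.g (V.lc x (V.lc y c)) d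
      + σ * (V.D x (V.g (t y c) d) - V.g (t y c) (V.lc x d))
      - σ * V.g (t x d) (V.lc y c) - σ * σ * V.g (t x d) (t y c) := fun x y ↦ by
    rw [hnab y c, hnab x, V.lc_add, V.lc_smul, V.D_algebraMap, zero_smul, zero_add,
      V.g_add_left, V.g_add_left, V.g_smul_left, V.g_smul_left, hskew2 x, V.g_add_right,
      V.g_smul_right]
    linear_combination -σ * V.lc_metric x (t y c) d
  have hbr : V.g (nab (V.bracket a b) c) d = V.g (V.lc (V.bracket a b) c) d
      + σ * (V.g (t c d) (V.lc a b) - V.g (t c d) (V.lc b a)) := by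
    rw [hnab, V.g_add_left, V.g_smul_left, hcyc, ← V.lc_torsion_free, V.g_sub_right]
  have hflat' := congrArg (V.g · d) (hflat a b c)
  simp only [V.g_sub_left, V.g_zero_left] at hflat'
  rw [Algebra.smul_def, Algebra.smul_def, map_mul]
  simp only [curvatureForm, curvature, covDerivTorsion, V.g_sub_left]
  linear_combination hflat' - hiter a b + hiter b a + hbr
    + σ * (hcyc (V.lc b a) c d - hcyc (V.lc a b) c d + hskew2 a (V.lc b c) d
      - hskew2 b (V.lc a c) d)

end Torsion

end VectorFieldCalculus

/-- For a flat metric connection `∇ = ∇^g + (1/2)T` with skew torsion,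
the Riemannian curvature tensor is
`R^g(a,b,c,d) = -(1/6)⟨T(a,b),T(c,d)⟩ + (1/12)⟨T(b,c),T(a,d)⟩ + (1/12)⟨T(c,a),T(b,d)⟩`. -/
theorem curvature_of_flat_skew_torsion {C X : Type*} [CommRing C] [Algebra ℝ C]
    [AddCommGroup X] [Module C X]
    (V : VectorFieldCalculus C X)
    (t : X → X → X)
    (hskew1 : ∀ a b c, V.g (t a b) c = - V.g (t b a) c)
    (hskew2 : ∀ a b c, V.g (t a b) c = - V.g (t a c) b)
    (nab : X → X → X)
    (hnab : ∀ a b, nab a b = V.lc a b + algebraMap ℝ C (1/2) • t a b)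
    (hflat : ∀ a b c, nab a (nab b c) - nab b (nab a c) - nab (V.bracket a b) c = 0)
    (Rg : X → X → X → X)
    (hRg : ∀ a b c, Rg a b c =
      V.lc a (V.lc b c) - V.lc b (V.lc a c) - V.lc (V.bracket a b) c)
    (a b c d : X) :
    V.g (Rg a b c) d
      = algebraMap ℝ C (-(1/6)) * V.g (t a b) (t c d)
        + algebraMap ℝ C (1/12) * V.g (t b c) (t a d)
        + algebraMap ℝ C (1/12) * V.g (t c a) (t b d) := by
  obtain rfl : Rg = V.curvature := funext₃ hRg
  have hτ : ∀ x y z w, V.g (t x y) (t w z) = -V.g (t x y) (t z w) := fun x y z w ↦ by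
    rw [V.g_symm, hskew1, V.g_symm]
  have := IsAddTorsionFree.of_module_of_charZero ℝ C
  have h3 := V.isAlgebraicCurvatureTensor_curvatureForm.three_nsmul_eq
    (A := fun x y z w ↦ (1/2 : ℝ) • V.covDerivTorsion t x y z w)
    (Q := fun x y z w ↦ (1/2 * (1/2) : ℝ) • (V.g (t x w) (t y z) - V.g (t y w) (t x z)))
    (fun x y z w ↦ by rw [V.covDerivTorsion_antisymm₁₂ hskew1, smul_neg])
    (fun x y z w ↦ by rw [V.covDerivTorsion_antisymm₂₃ hskew2, smul_neg])
    (fun x y z w ↦ by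
      rw [hτ z y, hskew1 z y, hτ w y, hskew1 w y, neg_neg, neg_neg, V.g_symm (t y z)])
    (fun x y z w ↦ by
      rw [V.curvatureForm_eq_of_flat hskew1 hskew2 (1/2) hnab hflat, smul_sub])
    a b c d
  simp only [VectorFieldCalculus.curvatureForm] at h3
  simp only [← Algebra.smul_def]
  linear_combination (norm := module) (1/3 : ℝ) • h3 + (1/12 : ℝ) • hτ a d b c
    - (1/6 : ℝ) • hτ b d a c + (1/12 : ℝ) • hτ c d a b + (1/6 : ℝ) • V.g_symm (t a b) (t c d)
    + (1/12 : ℝ) • V.g_symm (t a d) (t b c) + (1/12 : ℝ) • V.g_symm (t b d) (t c a)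
end
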